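/- Let γ, η > 0 with γη ≤ 2, and let (b_k) be nonnegative reals satisfying b_{k+1}² ≤ (√(1 − γη/2)·b_k + P)² + Q for constants P, Q ≥ 0. Then for all k, b_k ≤ b_0 + P/(1 − √(1 − γη/2)) + Q/(P + √(γη/2 · Q)). -/

import Mathlib

theorem recursion_to_uniform_bound
    (γ η P Q : ℝ) (hγ : 0 < γ) (hη : 0 < η) (hγη : γ * η ≤ 2)
    (hP : 0 ≤ P) (hQ : 0 ≤ Q)
    (b : ℕ → ℝ) (hb : ∀ k, 0 ≤ b k)
    (hrec : ∀ k, (b (k + 1)) ^ 2 ≤ (Real.sqrt (1 - γ * η / 2) * b k + P) ^ 2 + Q) :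
    ∀ k, b k ≤ b 0 + P / (1 - Real.sqrt (1 - γ * η / 2)) +
      Q / (P + Real.sqrt (γ * η / 2 * Q)) := by
  have ht0 : 0 < γ * η / 2 := by positivity
  set c := Real.sqrt (1 - γ * η / 2) with hcdef
  set s := Real.sqrt (γ * η / 2 * Q) with hsdef
  have hc0 : 0 ≤ c := Real.sqrt_nonneg _
  have hs0 : 0 ≤ s := Real.sqrt_nonneg _
  have hc2 : c ^ 2 = 1 - γ * η / 2 := Real.sq_sqrt (by linarith)
  have hs2 : s ^ 2 = γ * η / 2 * Q := Real.sq_sqrt (by positivity)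
  clear hcdef hsdef
  clear_value c s
  have hc1 : c < 1 := by nlinarith
  have h1c : 0 < 1 - c := by linarith
  set u := P / (1 - c) with hu
  set v := Q / (P + s) with hv
  clear_value u v
  have hu0 : 0 ≤ u := by rw [hu]; exact div_nonneg hP h1c.le
  have hv0 : 0 ≤ v := by rw [hv]; exact div_nonneg hQ (add_nonneg hP hs0)
  have hPe : u * (1 - c) = P := by rw [hu]; exact div_mul_cancel₀ P h1c.ne'
  have hM0 : 0 ≤ b 0 + u + v := by have := hb 0; linarith
  have hkey : (c * (b 0 + u + v) + P) ^ 2 + Q ≤ (b 0 + u + v) ^ 2 := by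
    rcases eq_or_lt_of_le hQ with hQ0 | hQpos
    · have h1 : c * (b 0 + u + v) + P ≤ b 0 + u + v := by
        nlinarith [hPe, mul_nonneg h1c.le (hb 0), mul_nonneg h1c.le hv0]
      have h00 : 0 ≤ c * (b 0 + u + v) + P :=
        add_nonneg (mul_nonneg hc0 hM0) hP
      rw [← hQ0]
      nlinarith [mul_self_le_mul_self h00 h1]
    · have hspos : 0 < s := by nlinarith [hs2, mul_pos ht0 hQpos, hs0]
      have hDpos : 0 < P + s := by linarith
      have hvD : v * (P + s) = Q := by rw [hv]; exact div_mul_cancel₀ Q hDpos.ne'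
      have hvDt : γ * η / 2 * (v * (P + s)) = s ^ 2 := by rw [hvD, ← hs2]
      have h5 : s ≤ P + γ * η / 2 * v := by
        nlinarith [hvDt, sq_nonneg P, hDpos]
      have htu : γ * η / 2 * u = (1 + c) * P := by
        linear_combination (1 + c) * hPe + u * hc2
      have htb0 : 0 ≤ γ * η / 2 * b 0 := mul_nonneg ht0.le (hb 0)
      have hF2 : (P + s) / (1 - c) ≤ (1 + c) * (b 0 + u + v) + P := by
        rw [div_le_iff₀ h1c]
        have hid : ((1 + c) * (b 0 + u + v) + P) * (1 - c)
            = γ * η / 2 * (b 0 + u + v) + (1 - c) * P := by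
          linear_combination (-(b 0 + u + v)) * hc2
        rw [hid]
        linarith [h5, htu, htb0]
      have hF1 : (1 - c) * v ≤ (1 - c) * (b 0 + u + v) - P := by
        nlinarith [hPe, mul_nonneg h1c.le (hb 0)]
      have hF1pos : 0 ≤ (1 - c) * v := mul_nonneg h1c.le hv0
      have hmul := mul_le_mul hF1 hF2 (div_nonneg hDpos.le h1c.le)
        (le_trans hF1pos hF1)
      have heq : (1 - c) * v * ((P + s) / (1 - c)) = Q := by
        field_simp
        linear_combination hvD
      have hid2 : ((1 - c) * (b 0 + u + v) - P) * ((1 + c) * (b 0 + u + v) + P)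
          = (b 0 + u + v) ^ 2 - (c * (b 0 + u + v) + P) ^ 2 := by ring
      linarith [heq ▸ hmul]
  intro k
  induction k with
  | zero => linarith
  | succ k ih =>
    have h1 : c * b k + P ≤ c * (b 0 + u + v) + P :=
      add_le_add_left (mul_le_mul_of_nonneg_left ih hc0) P
    have h00 : 0 ≤ c * b k + P := add_nonneg (mul_nonneg hc0 (hb k)) hP
    have h2 : b (k + 1) ^ 2 ≤ (b 0 + u + v) ^ 2 := by
      have hh := pow_le_pow_left₀ h00 h1 2
      linarith [hrec k, hh, hkey]
    exact le_of_pow_le_pow_left₀ two_ne_zero hM0 h2
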